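/- Let 𝒜 be an additive category and N ≥ 1. A morphism f : X → Y of N-complexes in 𝒜 is nullhomotopic (i.e. there exist s^j ∈ 𝒜(X^j, Y^{j−N+1}) with f^i = ∑_{j=0}^{N−1} d_Y^{N−j−1} ∘ s^{i+j} ∘ d_X^{j} for all i) if and only if f factors through an 𝒮_⊕-injective-projective object of C_N(𝒜). -/

import Mathlib

open CategoryTheory Limits

universe v u

variable {C : Type u} [Category.{v} C] [HasZeroMorphisms C]

/-- The `k`-fold iterate `d^k : X^i ⟶ X^(i+k)` of a degree-one family of morphisms. -/
def dIter (X : ℤ → C) (d : ∀ i : ℤ, X i ⟶ X (i + 1)) :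
    ∀ (k : ℕ) (i : ℤ), X i ⟶ X (i + k)
  | 0, i => eqToHom (by simp)
  | k + 1, i => d i ≫ dIter X d k (i + 1) ≫
      eqToHom (congrArg X (show i + 1 + (k : ℕ) = i + ((k : ℕ) + 1 : ℕ) by push_cast; ring))

/-- An `N`-complex in a category `C` with zero morphisms. -/
structure NComplex (C : Type u) [Category.{v} C] [HasZeroMorphisms C] (N : ℕ) where
  X : ℤ → C
  d : ∀ i : ℤ, X i ⟶ X (i + 1)
  dN : ∀ i : ℤ, dIter X d N i = 0

namespace NComplex

variable {N : ℕ}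

/-- A morphism of `N`-complexes. -/
@[ext]
structure Hom (A B : NComplex C N) where
  f : ∀ i : ℤ, A.X i ⟶ B.X i
  comm : ∀ i : ℤ, A.d i ≫ f (i + 1) = f i ≫ B.d i

/-- The category of `N`-complexes in `C`. -/
instance : Category (NComplex C N) where
  Hom A B := Hom A B
  id A := ⟨fun _ => 𝟙 _, by simp⟩
  comp φ ψ := ⟨fun i => φ.f i ≫ ψ.f i, fun i => by
    rw [← Category.assoc, φ.comm, Category.assoc, ψ.comm, Category.assoc]⟩
  id_comp φ := Hom.ext (funext fun i => Category.id_comp _)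
  comp_id φ := Hom.ext (funext fun i => Category.comp_id _)
  assoc φ ψ χ := Hom.ext (funext fun i => Category.assoc _ _ _)

end NComplex

section Mu

section Additive

variable {𝒜 : Type u} [Category.{v} 𝒜] [Preadditive 𝒜] [HasZeroObject 𝒜]
  [HasFiniteBiproducts 𝒜] {N : ℕ}

/-- A morphism `φ : X ⟶ Y` of `N`-complexes in an additive category is nullhomotopic
if there exist `s^j : X^j ⟶ Y^(j-N+1)` with
`φ^i = ∑_{j=0}^{N-1} d_Y^(N-j-1) ∘ s^(i+j) ∘ d_X^j` for all `i`. -/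
def Nullhomotopic {X Y : NComplex 𝒜 N} (φ : X ⟶ Y) : Prop :=
  ∃ s : ∀ j : ℤ, X.X j ⟶ Y.X (j - N + 1),
    ∀ i : ℤ, φ.f i = ∑ j : Fin N,
      dIter X.X X.d (j : ℕ) i ≫ s (i + ((j : ℕ) : ℤ)) ≫
        dIter Y.X Y.d (N - 1 - (j : ℕ)) (i + ((j : ℕ) : ℤ) - (N : ℤ) + 1) ≫
          eqToHom (congrArg Y.X
            (show i + ((j : ℕ) : ℤ) - (N : ℤ) + 1 + ((N - 1 - (j : ℕ) : ℕ) : ℤ) = i by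
              have := j.isLt; omega))

/-- An object `P` of `C_N(𝒜)` is `𝒮_⊕`-injective if every morphism into `P` extends
along every levelwise split monomorphism. -/
def SInjective (P : NComplex 𝒜 N) : Prop :=
  ∀ (A B : NComplex 𝒜 N) (g : A ⟶ B),
    (∀ i : ℤ, ∃ r : B.X i ⟶ A.X i, g.f i ≫ r = 𝟙 (A.X i)) →
      ∀ u : A ⟶ P, ∃ v : B ⟶ P, g ≫ v = u

/-- An object `P` of `C_N(𝒜)` is `𝒮_⊕`-projective if every morphism out of `P` lifts
along every levelwise split epimorphism. -/
def SProjective (P : NComplex 𝒜 N) : Prop :=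
  ∀ (A B : NComplex 𝒜 N) (g : A ⟶ B),
    (∀ i : ℤ, ∃ r : B.X i ⟶ A.X i, r ≫ g.f i = 𝟙 (B.X i)) →
      ∀ u : P ⟶ B, ∃ v : P ⟶ A, v ≫ g = u

section Aux

open NComplex

set_option linter.unusedSectionVars false
set_option maxHeartbeats 1000000

lemma fam_eq {F G : ℤ → 𝒜} (t : ∀ n, F n ⟶ G n) {a b : ℤ} (h : a = b)
    (h1 : F a = F b) (h2 : G b = G a) :
    t a = eqToHom h1 ≫ t b ≫ eqToHom h2 := by
  subst h; simp

lemma dIter_succ' (X : ℤ → 𝒜) (d : ∀ i : ℤ, X i ⟶ X (i + 1)) (m : ℕ) (i : ℤ) :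
    dIter X d (m + 1) i = dIter X d m i ≫ d (i + (m : ℕ)) ≫
      eqToHom (congrArg X (show i + (m:ℕ) + 1 = i + ((m:ℕ)+1 : ℕ) by push_cast; ring)) := by
  induction m generalizing i with
  | zero =>
      show d i ≫ _ ≫ _ = _
      rw [show dIter X d 0 i = eqToHom (by simp) from rfl,
        show dIter X d 0 (i+1) = eqToHom (by simp) from rfl,
        fam_eq (F := X) (G := fun n => X (n+1)) d
          (show i + ((0:ℕ):ℤ) = i by simp) (by simp) (by simp)]
      simp
  | succ m ih =>
      show d i ≫ dIter X d (m+1) (i+1) ≫ _ =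
        (d i ≫ dIter X d m (i+1) ≫ _) ≫ d (i + ((m+1:ℕ):ℤ)) ≫ _
      rw [ih, fam_eq (F := X) (G := fun n => X (n+1)) d
        (show i + ((m+1:ℕ):ℤ) = i + 1 + (m:ℕ) by push_cast; ring) (by push_cast; ring_nf)
        (by push_cast; ring_nf)]
      simp

lemma dIter_k_congr (X : ℤ → 𝒜) (d : ∀ i : ℤ, X i ⟶ X (i + 1)) {k k' : ℕ} (h : k = k')
    (i : ℤ) :
    dIter X d k i = dIter X d k' i ≫ eqToHom (congrArg X (by rw [h])) := by
  subst h; simp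

lemma dIter_add (X : ℤ → 𝒜) (d : ∀ i : ℤ, X i ⟶ X (i + 1)) (a b : ℕ) (i : ℤ) :
    dIter X d (a + b) i = dIter X d a i ≫ dIter X d b (i + (a:ℕ)) ≫
      eqToHom (congrArg X (show i + (a:ℕ) + (b:ℕ) = i + ((a+b : ℕ):ℤ) by push_cast; ring)) := by
  induction b with
  | zero =>
      rw [show dIter X d 0 (i + (a:ℕ)) = eqToHom (by simp) from rfl]
      simp
  | succ b ih =>
      show dIter X d ((a+b)+1) i = _
      rw [dIter_succ', ih, dIter_succ' X d b (i + (a:ℕ)),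
        fam_eq (F := X) (G := fun n => X (n+1)) d
          (show i + ((a+b:ℕ):ℤ) = i + (a:ℕ) + (b:ℕ) by push_cast; ring)
          (by push_cast; ring_nf) (by push_cast; ring_nf)]
      simp

lemma dIter_eq_zero (X : NComplex 𝒜 N) {a : ℕ} (ha : N ≤ a) (i : ℤ) :
    dIter X.X X.d a i = 0 := by
  rw [dIter_k_congr X.X X.d (show a = N + (a - N) by omega) i,
    dIter_add, X.dN, zero_comp, zero_comp]

lemma dIter_comp_dIter_zero (X : NComplex 𝒜 N) (a b : ℕ) (hab : N ≤ a + b) (i : ℤ) :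
    dIter X.X X.d a i ≫ dIter X.X X.d b (i + (a:ℕ)) = 0 := by
  by_cases ha : N ≤ a
  · rw [dIter_eq_zero X ha, zero_comp]
  · rw [dIter_k_congr X.X X.d (show b = (N - a) + (b - (N - a)) by omega) (i + (a:ℕ)),
      dIter_add]
    have h0 : dIter X.X X.d a i ≫ dIter X.X X.d (N - a) (i + (a:ℕ)) = 0 := by
      have h1 := X.dN i
      rw [dIter_k_congr X.X X.d (show N = a + (N - a) by omega) i, dIter_add] at h1
      simp only [← Category.assoc] at h1
      rw [comp_eqToHom_iff] at h1
      rw [comp_eqToHom_iff] at h1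
      simpa using h1
    simp only [← Category.assoc]
    rw [h0]
    simp

lemma d_comp_dIter_zero (X : NComplex 𝒜 N) {b : ℕ} (hb : N ≤ b + 1) (i : ℤ) :
    X.d i ≫ dIter X.X X.d b (i + 1) = 0 := by
  have h1 := dIter_eq_zero X hb i
  rw [show dIter X.X X.d (b+1) i = X.d i ≫ dIter X.X X.d b (i+1) ≫ _ from rfl] at h1
  simp only [← Category.assoc] at h1
  rw [comp_eqToHom_iff] at h1
  simpa using h1

lemma hom_dIter {A B : NComplex 𝒜 N} (g : A ⟶ B) (k : ℕ) (n : ℤ) :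
    g.f n ≫ dIter B.X B.d k n = dIter A.X A.d k n ≫ g.f (n + (k:ℕ)) := by
  induction k generalizing n with
  | zero =>
      rw [show dIter B.X B.d 0 n = eqToHom (by simp) from rfl,
        show dIter A.X A.d 0 n = eqToHom (by simp) from rfl,
        fam_eq (F := A.X) (G := B.X) g.f (show n + ((0:ℕ):ℤ) = n by simp)
          (by simp) (by simp)]
      simp
  | succ k ih =>
      rw [show dIter B.X B.d (k+1) n = B.d n ≫ dIter B.X B.d k (n+1) ≫ _ from rfl,
        show dIter A.X A.d (k+1) n = A.d n ≫ dIter A.X A.d k (n+1) ≫ _ from rfl,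
        fam_eq (F := A.X) (G := B.X) g.f
          (show n + ((k+1:ℕ):ℤ) = n + 1 + (k:ℕ) by push_cast; ring)
          (by push_cast; ring_nf) (by push_cast; ring_nf)]
      rw [← Category.assoc, ← g.comm, Category.assoc, reassoc_of% (ih (n+1))]
      simp

noncomputable abbrev Ix (X : NComplex 𝒜 N) (n : ℤ) : 𝒜 :=
  ⨁ (fun k : Fin N => X.X (n + ((k : ℕ) : ℤ)))

noncomputable def Iπ (X : NComplex 𝒜 N) (n : ℤ) (k : Fin N) :
    Ix X n ⟶ X.X (n + ((k : ℕ) : ℤ)) :=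
  biproduct.π (fun k : Fin N => X.X (n + ((k : ℕ) : ℤ))) k

noncomputable def Iι (X : NComplex 𝒜 N) (n : ℤ) (k : Fin N) :
    X.X (n + ((k : ℕ) : ℤ)) ⟶ Ix X n :=
  biproduct.ι (fun k : Fin N => X.X (n + ((k : ℕ) : ℤ))) k

lemma Ihom_ext {X : NComplex 𝒜 N} {n : ℤ} {T : 𝒜} {f g : T ⟶ Ix X n}
    (w : ∀ k, f ≫ Iπ X n k = g ≫ Iπ X n k) : f = g :=
  biproduct.hom_ext _ _ w

lemma Ihom_ext' {X : NComplex 𝒜 N} {n : ℤ} {T : 𝒜} {f g : Ix X n ⟶ T}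
    (w : ∀ k, Iι X n k ≫ f = Iι X n k ≫ g) : f = g :=
  biproduct.hom_ext' _ _ w

lemma Iι_π (X : NComplex 𝒜 N) (n : ℤ) (j k : Fin N) :
    Iι X n j ≫ Iπ X n k =
      if h : j = k then eqToHom (by rw [h]) else 0 := by
  rw [Iι, Iπ, biproduct.ι_π]

/-- conjugation of `Iι` by index equalities. -/
lemma Iι_congr (X : NComplex 𝒜 N) {a b : ℤ} (h : a = b) {k k' : Fin N} (hk : k = k')
    (h1 : X.X (a + ((k:ℕ):ℤ)) = X.X (b + ((k':ℕ):ℤ))) (h2 : Ix X b = Ix X a) :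
    Iι X a k = eqToHom h1 ≫ Iι X b k' ≫ eqToHom h2 := by
  subst h; subst hk; simp

lemma Iπ_congr (X : NComplex 𝒜 N) {a b : ℤ} (h : a = b) {k k' : Fin N} (hk : k = k')
    (h1 : Ix X a = Ix X b) (h2 : X.X (b + ((k':ℕ):ℤ)) = X.X (a + ((k:ℕ):ℤ))) :
    Iπ X a k = eqToHom h1 ≫ Iπ X b k' ≫ eqToHom h2 := by
  subst h; subst hk; simp

noncomputable def Id' (X : NComplex 𝒜 N) (n : ℤ) : Ix X n ⟶ Ix X (n + 1) :=
  biproduct.matrix fun j k =>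
    if h : (j : ℕ) = (k : ℕ) + 1 then
      eqToHom (congrArg X.X (show n + ((j:ℕ):ℤ) = n + 1 + ((k:ℕ):ℤ) by
        rw [h]; push_cast; ring))
    else 0

lemma Iι_Id'_Iπ (X : NComplex 𝒜 N) (n : ℤ) (j k : Fin N) :
    Iι X n j ≫ Id' X n ≫ Iπ X (n+1) k =
      if h : (j : ℕ) = (k : ℕ) + 1 then
        eqToHom (congrArg X.X (show n + ((j:ℕ):ℤ) = n + 1 + ((k:ℕ):ℤ) by
          rw [h]; push_cast; ring))
      else 0 := by
  simp [Iι, Iπ, Id']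

lemma Iι_Id' (hN : 1 ≤ N) (X : NComplex 𝒜 N) (n : ℤ) (j : Fin N) :
    Iι X n j ≫ Id' X n =
      if h : 1 ≤ (j : ℕ) then
        eqToHom (congrArg X.X (show n + ((j:ℕ):ℤ) = (n+1) + (((j:ℕ)-1 : ℕ):ℤ) by
          push_cast [h]; ring)) ≫ Iι X (n+1) ⟨(j:ℕ)-1, by omega⟩
      else 0 := by
  apply Ihom_ext
  intro k
  rw [Category.assoc, Iι_Id'_Iπ]
  by_cases h1 : 1 ≤ (j : ℕ)
  · rw [dif_pos h1]
    by_cases h2 : (j : ℕ) = (k : ℕ) + 1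
    · rw [dif_pos h2, Category.assoc, Iι_π,
        dif_pos (show (⟨(j:ℕ)-1, by omega⟩ : Fin N) = k by
          ext; show (j:ℕ)-1 = (k:ℕ); omega)]
      simp
    · rw [dif_neg h2, Category.assoc, Iι_π,
        dif_neg (show ¬ (⟨(j:ℕ)-1, by omega⟩ : Fin N) = k by
          intro hc
          exact h2 (by have : (j:ℕ)-1 = (k:ℕ) := congrArg Fin.val hc; omega))]
      simp
  · rw [dif_neg h1, dif_neg (by omega)]
    simp

lemma Iι_dIter (hN : 1 ≤ N) (X : NComplex 𝒜 N) (m : ℕ) (n : ℤ) (j : Fin N) :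
    Iι X n j ≫ dIter (Ix X) (Id' X) m n =
      if h : m ≤ (j : ℕ) then
        eqToHom (congrArg X.X (show n + ((j:ℕ):ℤ) = (n + (m:ℕ)) + (((j:ℕ)-m : ℕ):ℤ) by
          push_cast [h]; ring)) ≫ Iι X (n + (m:ℕ)) ⟨(j:ℕ)-m, by omega⟩
      else 0 := by
  induction m generalizing n j with
  | zero =>
      rw [show dIter (Ix X) (Id' X) 0 n = eqToHom (by simp) from rfl, dif_pos (by omega)]
      rw [Iι_congr X (show n + ((0:ℕ):ℤ) = n by simp)
        (show (⟨(j:ℕ)-0, by omega⟩ : Fin N) = j by ext; show (j:ℕ)-0 = (j:ℕ); omega)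
        (by norm_num) (by norm_num)]
      simp
  | succ m ih =>
      rw [show dIter (Ix X) (Id' X) (m+1) n = Id' X n ≫ dIter (Ix X) (Id' X) m (n+1) ≫ _
          from rfl]
      rw [← Category.assoc, Iι_Id' hN]
      by_cases h1 : 1 ≤ (j : ℕ)
      · rw [dif_pos h1]
        simp only [Category.assoc]
        have ih' := reassoc_of% (ih (n+1) ⟨(j:ℕ)-1, by omega⟩)
        rw [ih']
        by_cases h2 : m + 1 ≤ (j : ℕ)
        · rw [dif_pos (show m ≤ ((⟨(j:ℕ)-1, by omega⟩ : Fin N) : ℕ) from by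
            show m ≤ (j:ℕ)-1; omega), dif_pos h2]
          rw [Iι_congr X (show (n + 1) + ((m:ℕ):ℤ) = n + ((m+1:ℕ):ℤ) by push_cast; ring)
            (show (⟨((⟨(j:ℕ)-1, by omega⟩ : Fin N) : ℕ)-m, by omega⟩ : Fin N)
                = (⟨(j:ℕ)-(m+1), by omega⟩ : Fin N) by
              ext; show (j:ℕ)-1-m = (j:ℕ)-(m+1); omega)
            (congrArg X.X (show (n+1+((m:ℕ):ℤ)) + ((((j:ℕ)-1-m:ℕ)):ℤ)
                = (n + (((m+1:ℕ)):ℤ)) + ((((j:ℕ)-(m+1):ℕ)):ℤ) by omega))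
            (congrArg (Ix X) (show n + (((m+1:ℕ)):ℤ) = n+1+((m:ℕ):ℤ) by omega))]
          simp
        · rw [dif_neg (show ¬ m ≤ ((⟨(j:ℕ)-1, by omega⟩ : Fin N) : ℕ) from by
            show ¬ m ≤ (j:ℕ)-1; omega), dif_neg h2]
          simp
      · rw [dif_neg h1, dif_neg (by omega)]
        simp

noncomputable abbrev IC (hN : 1 ≤ N) (X : NComplex 𝒜 N) : NComplex 𝒜 N where
  X := Ix X
  d := Id' X
  dN := fun n => by
    apply Ihom_ext'
    intro j
    rw [comp_zero]
    have := Iι_dIter hN X N n j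
    rw [dif_neg (by omega)] at this
    exact this


lemma dIter_comp_d_zero (X : NComplex 𝒜 N) {b : ℕ} (hb : N ≤ b + 1) (i : ℤ) :
    dIter X.X X.d b i ≫ X.d (i + (b:ℕ)) = 0 := by
  have h1 := dIter_eq_zero X hb i
  rw [dIter_succ'] at h1
  simp only [← Category.assoc] at h1
  rw [comp_eqToHom_iff] at h1
  simpa using h1

lemma Ilift_π {X : NComplex 𝒜 N} {n : ℤ} {T : 𝒜}
    (f : ∀ k : Fin N, T ⟶ X.X (n + ((k:ℕ):ℤ))) (k : Fin N) :
    biproduct.lift f ≫ Iπ X n k = f k := biproduct.lift_π _ _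

lemma Iι_desc {X : NComplex 𝒜 N} {n : ℤ} {T : 𝒜}
    (f : ∀ k : Fin N, X.X (n + ((k:ℕ):ℤ)) ⟶ T) (k : Fin N) :
    Iι X n k ≫ biproduct.desc f = f k := biproduct.ι_desc _ _

lemma Ilift_desc {X : NComplex 𝒜 N} {n : ℤ} {T T' : 𝒜}
    (f : ∀ k : Fin N, T ⟶ X.X (n + ((k:ℕ):ℤ)))
    (g : ∀ k : Fin N, X.X (n + ((k:ℕ):ℤ)) ⟶ T') :
    biproduct.lift f ≫ biproduct.desc g = ∑ k : Fin N, f k ≫ g k := biproduct.lift_desc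

lemma Ilift_π_assoc {X : NComplex 𝒜 N} {n : ℤ} {T T' : 𝒜}
    (f : ∀ k : Fin N, T ⟶ X.X (n + ((k:ℕ):ℤ))) (k : Fin N)
    (g : X.X (n + ((k:ℕ):ℤ)) ⟶ T') :
    biproduct.lift f ≫ Iπ X n k ≫ g = f k ≫ g := by
  rw [← Category.assoc, Ilift_π]

lemma Iι_desc_assoc {X : NComplex 𝒜 N} {n : ℤ} {T T' : 𝒜}
    (f : ∀ k : Fin N, X.X (n + ((k:ℕ):ℤ)) ⟶ T) (k : Fin N) (g : T ⟶ T') :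
    Iι X n k ≫ biproduct.desc f ≫ g = f k ≫ g := by
  rw [← Category.assoc, Iι_desc]

lemma Id'_Iπ (X : NComplex 𝒜 N) (n : ℤ) (k : Fin N) :
    Id' X n ≫ Iπ X (n+1) k =
      if h : (k:ℕ)+1 < N then
        Iπ X n ⟨(k:ℕ)+1, h⟩ ≫ eqToHom (congrArg X.X
          (show n + (((k:ℕ)+1:ℕ):ℤ) = n+1+((k:ℕ):ℤ) by push_cast; ring))
      else 0 := by
  apply Ihom_ext'
  intro j
  rw [Iι_Id'_Iπ]
  by_cases h : (k:ℕ)+1 < N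
  · rw [dif_pos h, ← Category.assoc, Iι_π]
    by_cases hj : j = ⟨(k:ℕ)+1, h⟩
    · rw [dif_pos hj, dif_pos (show (j:ℕ) = (k:ℕ)+1 by rw [hj])]
      simp
    · rw [dif_neg hj, dif_neg (show ¬ (j:ℕ) = (k:ℕ)+1 from fun hc => hj (by ext; exact hc))]
      simp
  · rw [dif_neg h, comp_zero,
      dif_neg (show ¬ (j:ℕ) = (k:ℕ)+1 by have := j.isLt; omega)]

/-- The canonical map `λ_X : X ⟶ I_N(X)`. -/
noncomputable def lam (hN : 1 ≤ N) (X : NComplex 𝒜 N) : X ⟶ IC hN X where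
  f n := biproduct.lift fun k : Fin N => dIter X.X X.d (k:ℕ) n
  comm n := by
    apply Ihom_ext
    intro k
    dsimp only [IC]
    simp only [Category.assoc]
    rw [Ilift_π, Id'_Iπ]
    by_cases h : (k:ℕ)+1 < N
    · rw [dif_pos h, ← Category.assoc, Ilift_π,
        show dIter X.X X.d ((k:ℕ)+1) n = X.d n ≫ dIter X.X X.d (k:ℕ) (n+1) ≫ _ from rfl]
      simp
    · rw [dif_neg h, comp_zero, d_comp_dIter_zero X (by omega) n]

/-- A chain map into `I_N(X)` built from arbitrary degreewise data. -/
noncomputable def toI (hN : 1 ≤ N) (X B : NComplex 𝒜 N) (t : ∀ n : ℤ, B.X n ⟶ X.X n) :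
    B ⟶ IC hN X where
  f n := biproduct.lift fun k : Fin N => dIter B.X B.d (k:ℕ) n ≫ t (n + ((k:ℕ):ℤ))
  comm n := by
    apply Ihom_ext
    intro k
    dsimp only [IC]
    simp only [Category.assoc]
    rw [Ilift_π, Id'_Iπ]
    by_cases h : (k:ℕ)+1 < N
    · rw [dif_pos h, Ilift_π_assoc,
        fam_eq (F := B.X) (G := X.X) t
          (show n + (((k:ℕ)+1:ℕ):ℤ) = n+1+((k:ℕ):ℤ) by push_cast; ring)
          (by push_cast; ring_nf) (by push_cast; ring_nf),
        show dIter B.X B.d ((k:ℕ)+1) n = B.d n ≫ dIter B.X B.d (k:ℕ) (n+1) ≫ _ from rfl]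
      simp
    · rw [dif_neg h, comp_zero,
        reassoc_of% (d_comp_dIter_zero B (show N ≤ (k:ℕ)+1 by omega) n)]
      simp

/-- A chain map out of `I_N(X)` built from arbitrary degreewise data. -/
noncomputable def fromI (hN : 1 ≤ N) (X B : NComplex 𝒜 N)
    (t : ∀ m : ℤ, X.X m ⟶ B.X (m - (N:ℤ) + 1)) : IC hN X ⟶ B where
  f n := biproduct.desc fun k : Fin N =>
    t (n + ((k:ℕ):ℤ)) ≫ dIter B.X B.d (N-1-(k:ℕ)) (n + ((k:ℕ):ℤ) - (N:ℤ) + 1) ≫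
      eqToHom (congrArg B.X
        (show n + ((k:ℕ):ℤ) - (N:ℤ) + 1 + ((N-1-(k:ℕ) : ℕ):ℤ) = n by
          have := k.isLt; omega))
  comm n := by
    apply Ihom_ext'
    intro j
    dsimp only [IC]
    conv_lhs => rw [← Category.assoc]
    rw [Iι_Id' hN]
    conv_rhs => rw [← Category.assoc]
    rw [Iι_desc]
    by_cases h : 1 ≤ (j:ℕ)
    · rw [dif_pos h, Category.assoc, Iι_desc]
      simp only [Category.assoc]
      -- rewrite RHS `B.d n` to matching index
      rw [fam_eq (F := B.X) (G := fun m => B.X (m+1)) B.d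
        (show n = n + ((j:ℕ):ℤ) - (N:ℤ) + 1 + ((N-1-(j:ℕ) : ℕ):ℤ) by
          have := j.isLt; omega)
        (by have := j.isLt; congr 1; omega) (by have := j.isLt; congr 1; omega)]
      -- rewrite the LHS data morphism index
      rw [fam_eq (F := X.X) (G := fun m => B.X (m - (N:ℤ) + 1)) t
        (show n + 1 + (((j:ℕ)-1 : ℕ):ℤ) = n + ((j:ℕ):ℤ) by
          have := j.isLt; omega)
        (by have := j.isLt; congr 1; omega) (by have := j.isLt; congr 1; omega)]
      -- rewrite the LHS dIter: change exponent and position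
      rw [dIter_k_congr B.X B.d (show N-1-((j:ℕ)-1) = (N-1-(j:ℕ))+1 by omega),
        dIter_succ' B.X B.d (N-1-(j:ℕ)),
        fam_eq (F := B.X) (G := fun m => B.X (m + ((N-1-(j:ℕ) : ℕ):ℤ)))
          (fun m => dIter B.X B.d (N-1-(j:ℕ)) m)
          (show n + 1 + (((j:ℕ)-1 : ℕ):ℤ) - (N:ℤ) + 1 = n + ((j:ℕ):ℤ) - (N:ℤ) + 1 by
            have := j.isLt; omega)
          (by have := j.isLt; congr 1; omega) (by have := j.isLt; congr 1; omega),
        fam_eq (F := B.X) (G := fun m => B.X (m+1)) B.d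
          (show n + 1 + (((j:ℕ)-1 : ℕ):ℤ) - (N:ℤ) + 1 + ((N-1-(j:ℕ) : ℕ):ℤ)
              = n + ((j:ℕ):ℤ) - (N:ℤ) + 1 + ((N-1-(j:ℕ) : ℕ):ℤ) by
            have := j.isLt; omega)
          (by have := j.isLt; congr 1; omega) (by have := j.isLt; congr 1; omega)]
      simp
    · rw [dif_neg h, zero_comp]
      symm
      rw [fam_eq (F := B.X) (G := fun m => B.X (m+1)) B.d
        (show n = n + ((j:ℕ):ℤ) - (N:ℤ) + 1 + ((N-1-(j:ℕ) : ℕ):ℤ) by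
          have := j.isLt; omega)
        (by have := j.isLt; congr 1; omega) (by have := j.isLt; congr 1; omega)]
      simp only [Category.assoc, eqToHom_trans, eqToHom_trans_assoc, eqToHom_refl,
        Category.id_comp, Category.comp_id]
      rw [reassoc_of% (dIter_comp_d_zero B (show N ≤ (N-1-(j:ℕ))+1 by omega)
        (n + ((j:ℕ):ℤ) - (N:ℤ) + 1))]
      simp

/-- A chain map into `I_N(X)` is determined by its `0`-th components. -/
lemma hom_to_I (hN : 1 ≤ N) {B X : NComplex 𝒜 N} (v : B ⟶ IC hN X) (n : ℤ) (k : Fin N) :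
    v.f n ≫ Iπ X n k =
      dIter B.X B.d (k:ℕ) n ≫ v.f (n + ((k:ℕ):ℤ)) ≫ Iπ X (n + ((k:ℕ):ℤ)) ⟨0, hN⟩ ≫
        eqToHom (congrArg X.X
          (show (n + ((k:ℕ):ℤ)) + ((0:ℕ):ℤ) = n + ((k:ℕ):ℤ) by simp)) := by
  obtain ⟨m, hm⟩ := k
  induction m generalizing n with
  | zero =>
      rw [show dIter B.X B.d ((⟨0,hm⟩ : Fin N) : ℕ) n = eqToHom (by simp) from rfl,
        fam_eq (F := B.X) (G := fun a => Ix X a) v.f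
          (show n + (((⟨0,hm⟩ : Fin N) : ℕ):ℤ) = n by simp) (by simp) (by simp),
        Iπ_congr X (show n + (((⟨0,hm⟩ : Fin N) : ℕ):ℤ) = n by simp)
          (show (⟨0, hN⟩ : Fin N) = ⟨0, hm⟩ from rfl) (by simp) (by simp)]
      simp
  | succ m ih =>
      have hc := v.comm n
      dsimp only [IC] at hc
      have h1 := congrArg (fun q => q ≫ Iπ X (n+1) ⟨m, by omega⟩) hc
      simp only [Category.assoc] at h1
      rw [Id'_Iπ, dif_pos (show ((⟨m, by omega⟩ : Fin N) : ℕ) + 1 < N from hm)] at h1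
      rw [ih (n+1) (by omega)] at h1
      -- h1 : B.d n ≫ dIter m (n+1) ≫ v.f (n+1+↑m) ≫ Iπ ⟨0⟩ ≫ e = v.f n ≫ Iπ ⟨m+1⟩ ≫ e
      rw [← Category.assoc (v.f n)] at h1
      replace h1 := h1.symm
      rw [comp_eqToHom_iff] at h1
      rw [h1]
      rw [show dIter B.X B.d ((⟨m+1,hm⟩ : Fin N) : ℕ) n
          = B.d n ≫ dIter B.X B.d m (n+1) ≫ _ from rfl]
      rw [fam_eq (F := B.X) (G := fun a => Ix X a) v.f
          (show n + (((⟨m+1,hm⟩ : Fin N) : ℕ):ℤ) = n + 1 + ((m:ℕ):ℤ) by push_cast; ring)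
          (by push_cast; ring_nf) (by push_cast; ring_nf),
        Iπ_congr X (show n + (((⟨m+1,hm⟩ : Fin N) : ℕ):ℤ) = n + 1 + ((m:ℕ):ℤ) by
            push_cast; ring)
          (show (⟨0, hN⟩ : Fin N) = ⟨0, hN⟩ from rfl) (by push_cast; ring_nf)
          (by push_cast; ring_nf)]
      simp

/-- A chain map out of `I_N(X)` is determined by its top components. -/
lemma hom_from_I_aux (hN : 1 ≤ N) {X B : NComplex 𝒜 N} (w : IC hN X ⟶ B)
    (m : ℕ) (hm : m < N) (n : ℤ) :
    Iι X n ⟨N-1-m, by omega⟩ ≫ w.f n =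
      eqToHom (congrArg X.X
          (show n + (((N-1-m : ℕ)):ℤ) = (n - (m:ℕ)) + (((N-1 : ℕ)):ℤ) by omega)) ≫
        Iι X (n - (m:ℕ)) ⟨N-1, by omega⟩ ≫ w.f (n - (m:ℕ)) ≫
          dIter B.X B.d m (n - (m:ℕ)) ≫
            eqToHom (congrArg B.X (show (n - (m:ℕ)) + ((m:ℕ):ℤ) = n by ring)) := by
  induction m generalizing n with
  | zero =>
      rw [show dIter B.X B.d 0 (n - ((0:ℕ):ℤ)) = eqToHom (by simp) from rfl,
        fam_eq (F := fun a => Ix X a) (G := B.X) w.f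
          (show n - ((0:ℕ):ℤ) = n by simp) (by simp) (by simp),
        Iι_congr X (show n - ((0:ℕ):ℤ) = n by simp)
          (show (⟨N-1, by omega⟩ : Fin N) = ⟨N-1-0, by omega⟩ from rfl) (by simp) (by simp)]
      simp
  | succ m ih =>
      have hc := w.comm (n-1)
      dsimp only [IC] at hc
      have h1 := congrArg (fun q => Iι X (n-1) ⟨N-1-m, by omega⟩ ≫ q) hc
      simp only [← Category.assoc] at h1
      rw [Iι_Id' hN, dif_pos (show 1 ≤ ((⟨N-1-m, by omega⟩ : Fin N) : ℕ) by
        show 1 ≤ N-1-m; omega)] at h1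
      simp only [Category.assoc] at h1
      rw [reassoc_of% (ih (by omega) (n-1))] at h1
      -- h1 : e ≫ Iι X ((n-1)+1) ⟨(N-1-m)-1⟩ ≫ w.f ((n-1)+1)
      --      = e ≫ Iι (n-1-m) ⟨N-1⟩ ≫ w.f ≫ dIter m ≫ e ≫ B.d (n-1)
      rw [eqToHom_comp_iff] at h1
      rw [Iι_congr X (show n = (n-1)+1 by ring)
          (show (⟨N-1-(m+1), by omega⟩ : Fin N) = ⟨((⟨N-1-m, by omega⟩ : Fin N) : ℕ)-1,
            by omega⟩ from by ext; show N-1-(m+1) = N-1-m-1; omega)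
          (by congr 1
              show n + ((N-1-(m+1) : ℕ):ℤ) = (n-1+1) + (((N-1-m)-1 : ℕ):ℤ)
              omega)
          (by congr 1; omega),
        fam_eq (F := fun a => Ix X a) (G := B.X) w.f
          (show n = (n-1)+1 by ring) (by congr 1; omega) (by congr 1; omega)]
      simp only [Category.assoc, eqToHom_trans, eqToHom_trans_assoc, eqToHom_refl,
        Category.id_comp, Category.comp_id]
      rw [reassoc_of% h1]
      rw [fam_eq (F := B.X) (G := fun a => B.X (a+1)) B.d
          (show n - 1 = (n - ((m+1:ℕ):ℤ)) + ((m:ℕ):ℤ) by push_cast; ring)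
          (by congr 1; push_cast; ring) (by congr 1; push_cast; ring),
        Iι_congr X (show n - 1 - ((m:ℕ):ℤ) = n - ((m+1:ℕ):ℤ) by push_cast; ring)
          (show (⟨N-1, by omega⟩ : Fin N) = ⟨N-1, by omega⟩ from rfl)
          (by congr 1; push_cast; ring) (by congr 1; push_cast; ring),
        fam_eq (F := fun a => Ix X a) (G := B.X) w.f
          (show n - 1 - ((m:ℕ):ℤ) = n - ((m+1:ℕ):ℤ) by push_cast; ring)
          (by congr 1; push_cast; ring) (by congr 1; push_cast; ring),
        fam_eq (F := B.X) (G := fun a => B.X (a + ((m:ℕ):ℤ)))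
          (fun a => dIter B.X B.d m a)
          (show n - 1 - ((m:ℕ):ℤ) = n - ((m+1:ℕ):ℤ) by push_cast; ring)
          (by congr 1; push_cast; ring) (by congr 1; push_cast; ring),
        dIter_succ' B.X B.d m (n - ((m+1:ℕ):ℤ))]
      simp

lemma hom_from_I (hN : 1 ≤ N) {X B : NComplex 𝒜 N} (w : IC hN X ⟶ B) (n : ℤ) (k : Fin N) :
    Iι X n k ≫ w.f n =
      eqToHom (congrArg X.X
          (show n + ((k:ℕ):ℤ) = (n + ((k:ℕ):ℤ) - (N:ℤ) + 1) + (((N-1 : ℕ)):ℤ) by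
            have := k.isLt; omega)) ≫
        Iι X (n + ((k:ℕ):ℤ) - (N:ℤ) + 1) ⟨N-1, by omega⟩ ≫
          w.f (n + ((k:ℕ):ℤ) - (N:ℤ) + 1) ≫
            dIter B.X B.d (N-1-(k:ℕ)) (n + ((k:ℕ):ℤ) - (N:ℤ) + 1) ≫
              eqToHom (congrArg B.X
                (show (n + ((k:ℕ):ℤ) - (N:ℤ) + 1) + ((N-1-(k:ℕ) : ℕ):ℤ) = n by
                  have := k.isLt; omega)) := by
  have h := hom_from_I_aux hN w (N-1-(k:ℕ)) (by omega) n
  rw [Iι_congr X (show n = n by rfl)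
      (show (⟨N-1-(N-1-(k:ℕ)), by omega⟩ : Fin N) = k from by
        ext; show N-1-(N-1-(k:ℕ)) = (k:ℕ); have := k.isLt; omega)
      (by congr 1
          show n + (((N-1-(N-1-(k:ℕ)) : ℕ)):ℤ) = n + ((k:ℕ):ℤ)
          have := k.isLt; omega) (rfl),
    Iι_congr X (show n - ((N-1-(k:ℕ) : ℕ):ℤ) = n + ((k:ℕ):ℤ) - (N:ℤ) + 1 by
        have := k.isLt; omega)
      (show (⟨N-1, by omega⟩ : Fin N) = ⟨N-1, by omega⟩ from rfl)
      (by congr 1; have := k.isLt; omega) (by congr 1; have := k.isLt; omega),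
    fam_eq (F := fun a => Ix X a) (G := B.X) w.f
      (show n - ((N-1-(k:ℕ) : ℕ):ℤ) = n + ((k:ℕ):ℤ) - (N:ℤ) + 1 by have := k.isLt; omega)
      (by congr 1; have := k.isLt; omega) (by congr 1; have := k.isLt; omega),
    fam_eq (F := B.X) (G := fun a => B.X (a + ((N-1-(k:ℕ) : ℕ):ℤ)))
      (fun a => dIter B.X B.d (N-1-(k:ℕ)) a)
      (show n - ((N-1-(k:ℕ) : ℕ):ℤ) = n + ((k:ℕ):ℤ) - (N:ℤ) + 1 by have := k.isLt; omega)
      (by congr 1; have := k.isLt; omega) (by congr 1; have := k.isLt; omega)] at h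
  simp only [Category.assoc, eqToHom_trans, eqToHom_trans_assoc, eqToHom_refl,
    Category.id_comp, Category.comp_id] at h
  rw [eqToHom_comp_iff] at h
  rw [h]
  simp

lemma IC_SInjective (hN : 1 ≤ N) (X : NComplex 𝒜 N) : SInjective (IC hN X) := by
  intro A B g hg u
  choose r hr using hg
  refine ⟨toI hN X B (fun n => r n ≫ u.f n ≫ Iπ X n ⟨0, hN⟩ ≫
    eqToHom (congrArg X.X (show n + ((0:ℕ):ℤ) = n by simp))), ?_⟩
  refine NComplex.Hom.ext (funext fun n => ?_)
  apply Ihom_ext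
  intro k
  show (g.f n ≫ (toI hN X B _).f n) ≫ Iπ X n k = u.f n ≫ Iπ X n k
  rw [hom_to_I hN u n k]
  dsimp only [toI]
  rw [Category.assoc, Ilift_π, ← Category.assoc, hom_dIter g ((k:ℕ)) n, Category.assoc,
    reassoc_of% (hr (n + ((k:ℕ):ℤ)))]

lemma IC_SProjective (hN : 1 ≤ N) (X : NComplex 𝒜 N) : SProjective (IC hN X) := by
  intro A B g hg u
  choose r hr using hg
  refine ⟨fromI hN X A (fun m =>
    (eqToHom (congrArg X.X (show m = (m - (N:ℤ) + 1) + ((N-1 : ℕ):ℤ) by omega)) ≫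
      Iι X (m - (N:ℤ) + 1) ⟨N-1, by omega⟩ ≫ u.f (m - (N:ℤ) + 1)) ≫
        r (m - (N:ℤ) + 1)), ?_⟩
  refine NComplex.Hom.ext (funext fun n => ?_)
  apply Ihom_ext'
  intro k
  show Iι X n k ≫ (fromI hN X A _).f n ≫ g.f n = Iι X n k ≫ u.f n
  rw [hom_from_I hN u n k]
  dsimp only [fromI]
  rw [Iι_desc_assoc]
  simp only [Category.assoc]
  rw [fam_eq (F := A.X) (G := B.X) g.f
      (show n = (n + ((k:ℕ):ℤ) - (N:ℤ) + 1) + ((N-1-(k:ℕ) : ℕ):ℤ) by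
        have := k.isLt; omega)
      (by congr 1; have := k.isLt; omega) (by congr 1; have := k.isLt; omega)]
  simp only [Category.assoc, eqToHom_trans, eqToHom_trans_assoc, eqToHom_refl,
    Category.id_comp, Category.comp_id]
  rw [← reassoc_of% (hom_dIter g (N-1-(k:ℕ)) (n + ((k:ℕ):ℤ) - (N:ℤ) + 1)),
    reassoc_of% (hr (n + ((k:ℕ):ℤ) - (N:ℤ) + 1))]

end Aux
/-- Let `𝒜` be an additive category and `N ≥ 1`.  A morphism `φ : X ⟶ Y` of
`N`-complexes in `𝒜` is nullhomotopic if and only if it factors through an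
`𝒮_⊕`-injective-projective object of `C_N(𝒜)` (with respect to the exact structure of
levelwise split short exact sequences). -/
theorem nullhomotopic_iff_factors_through_injective_projective
    (hN : 1 ≤ N) {X Y : NComplex 𝒜 N} (φ : X ⟶ Y) :
    Nullhomotopic φ ↔
      ∃ (P : NComplex 𝒜 N) (g : X ⟶ P) (h : P ⟶ Y),
        SInjective P ∧ SProjective P ∧ φ = g ≫ h := by
  constructor
  · rintro ⟨s, hs⟩
    refine ⟨IC hN X, lam hN X, fromI hN X Y s,
      IC_SInjective hN X, IC_SProjective hN X, ?_⟩
    refine NComplex.Hom.ext (funext fun n => ?_)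
    show φ.f n = (lam hN X).f n ≫ (fromI hN X Y s).f n
    rw [hs n]
    dsimp only [lam, fromI]
    rw [Ilift_desc]
  · rintro ⟨P, g, h, hPinj, _hPproj, hφ⟩
    have hretr : ∀ i, ∃ rr : (IC hN X).X i ⟶ X.X i,
        (lam hN X).f i ≫ rr = 𝟙 (X.X i) := by
      intro i
      refine ⟨Iπ X i ⟨0, hN⟩ ≫ eqToHom (congrArg X.X (show i + ((0:ℕ):ℤ) = i by simp)), ?_⟩
      dsimp only [lam]
      rw [Ilift_π_assoc,
        show dIter X.X X.d (((⟨0, hN⟩ : Fin N)):ℕ) i = eqToHom (by simp) from rfl]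
      simp
    obtain ⟨v, hv⟩ := hPinj X (IC hN X) (lam hN X) hretr g
    refine ⟨fun m =>
      eqToHom (congrArg X.X (show m = (m - (N:ℤ) + 1) + ((N-1 : ℕ):ℤ) by omega)) ≫
        Iι X (m - (N:ℤ) + 1) ⟨N-1, by omega⟩ ≫ (v ≫ h).f (m - (N:ℤ) + 1), fun i => ?_⟩
    have hφi : φ.f i = (lam hN X).f i ≫ (v ≫ h).f i := by
      rw [hφ, ← hv]
      exact (Category.assoc _ _ _)
    rw [hφi]
    have hdesc : (v ≫ h).f i = biproduct.desc (fun k : Fin N => Iι X i k ≫ (v ≫ h).f i) := by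
      apply Ihom_ext'
      intro k
      rw [Iι_desc]
    rw [hdesc]
    dsimp only [lam]
    rw [Ilift_desc]
    refine Finset.sum_congr rfl (fun k _ => ?_)
    rw [hom_from_I hN (v ≫ h) i k]
    simp only [Category.assoc]

end Additive
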